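/- arXiv:2507.02157 — 5 statements merged into one kernel-verified Lean document; each statement's English description precedes it below -/
import Mathlib

section
/- For a map κ on a state space with per-capita update π_i(κ(z)) = π_i(z)·Ψ_i(z) where Ψ_i is positive and continuous, if μ is an ergodic κ-invariant Borel probability measure with compact support such that μ-almost every z has π_i(z) > 0, then ∫ ln Ψ_i(z) μ(dz) = 0. -/
/-!
Where `π > 0` we have `log π ∘ κ - log π = log Ψ`, so `log Ψ` is a coboundary over the
measure-preserving map `κ`. It is integrable, being continuous on a compact set of full measure,
whereas `log π` need not be. Truncating `log π` to `[-n, n]` gives bounded coboundaries, each of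
integral zero by invariance, and dominated by `|log Ψ|` because truncation is 1-Lipschitz; they
converge to `log Ψ` pointwise, so `∫ log Ψ dμ = 0` by dominated convergence.
-/

open MeasureTheory Filter Set Topology

theorem Continuous.integrable_of_ae_mem_isCompact {X E : Type*} [TopologicalSpace X] [T2Space X]
    [MeasurableSpace X] [OpensMeasurableSpace X] [NormedAddCommGroup E] {μ : Measure X}
    [IsFiniteMeasureOnCompacts μ] {f : X → E} (hf : Continuous f) {K : Set X} (hK : IsCompact K)
    (hKμ : ∀ᵐ x ∂μ, x ∈ K) : Integrable f μ := by
  simpa only [IntegrableOn, Measure.restrict_eq_self_of_ae_mem hKμ] using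
    hf.continuousOn.integrableOn_compact (μ := μ) hK

lemma tendsto_projIcc_neg_natCast_natCast (y : ℝ) :
    Tendsto (fun n : ℕ => (projIcc (-n : ℝ) n (neg_le_self n.cast_nonneg) y : ℝ)) atTop (𝓝 y) := by
  refine tendsto_const_nhds.congr' ?_
  filter_upwards [eventually_ge_atTop ⌈|y|⌉₊] with n hn
  have hy : |y| ≤ n := (Nat.le_ceil _).trans (Nat.cast_le.mpr hn)
  rw [projIcc_of_mem _ (abs_le.mp hy)]

namespace MeasureTheory.MeasurePreserving

variable {α : Type*} [MeasurableSpace α] {μ : Measure α} {T : α → α}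

theorem integral_comp_sub_eq_zero [IsFiniteMeasure μ] (hT : MeasurePreserving T μ μ)
    {g : α → ℝ} (hg : Measurable g) {C : ℝ} (hgC : ∀ x, |g x| ≤ C) :
    ∫ x, (g (T x) - g x) ∂μ = 0 := by
  have hg_int : Integrable g μ :=
    (integrable_const C).mono' hg.aestronglyMeasurable (.of_forall hgC)
  have hgT_int : Integrable (fun x => g (T x)) μ := hT.integrable_comp_of_integrable hg_int
  rw [integral_sub hgT_int hg_int, ← integral_map hT.aemeasurable hg.aestronglyMeasurable,
    hT.map_eq, sub_self]

theorem integral_eq_zero_of_comp_sub_ae_eq [IsFiniteMeasure μ] (hT : MeasurePreserving T μ μ)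
    {f h : α → ℝ} (hf : Measurable f) (hh : Integrable h μ)
    (hfh : (fun x => f (T x) - f x) =ᵐ[μ] h) : ∫ x, h x ∂μ = 0 := by
  let g : ℕ → α → ℝ := fun n x => projIcc (-n : ℝ) n (neg_le_self n.cast_nonneg) (f x)
  have hg_meas (n : ℕ) : Measurable (g n) :=
    (continuous_subtype_val.comp continuous_projIcc).measurable.comp hf
  have hg_bound (n : ℕ) (x : α) : |g n x| ≤ n := abs_le.mpr (projIcc _ _ _ (f x)).2
  have h_dom (n : ℕ) : ∀ᵐ x ∂μ, ‖g n (T x) - g n x‖ ≤ ‖h x‖ := by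
    filter_upwards [hfh] with x hx
    rw [Real.norm_eq_abs, Real.norm_eq_abs, ← hx]
    exact abs_projIcc_sub_projIcc _
  have h_lim : ∀ᵐ x ∂μ, Tendsto (fun n => g n (T x) - g n x) atTop (𝓝 (h x)) := by
    filter_upwards [hfh] with x hx
    rw [← hx]
    exact (tendsto_projIcc_neg_natCast_natCast _).sub (tendsto_projIcc_neg_natCast_natCast _)
  have h_tendsto := tendsto_integral_of_dominated_convergence
    (F := fun n x => g n (T x) - g n x) _
    (fun n => (((hg_meas n).comp hT.measurable).sub (hg_meas n)).aestronglyMeasurable)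
    hh.norm h_dom h_lim
  have h_zero : (fun n => ∫ x, (g n (T x) - g n x) ∂μ) = fun _ => 0 :=
    funext fun n => hT.integral_comp_sub_eq_zero (hg_meas n) (hg_bound n)
  rw [h_zero] at h_tendsto
  exact tendsto_nhds_unique h_tendsto tendsto_const_nhds

end MeasureTheory.MeasurePreserving

theorem stmt0_general
    {S : Type*} [MetricSpace S] [MeasurableSpace S] [BorelSpace S]
    (κ : S → S)
    (π Ψ : S → ℝ) (hπ : Continuous π)
    (hΨ : Continuous Ψ) (hΨ0 : ∀ z, 0 < Ψ z)
    (hrel : ∀ z, π (κ z) = π z * Ψ z)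
    (μ : Measure S) [IsProbabilityMeasure μ]
    (herg : Ergodic κ μ)
    (hcomp : ∃ K : Set S, IsCompact K ∧ μ K = 1)
    (hpos : μ {z | 0 < π z} = 1) :
    ∫ z, Real.log (Ψ z) ∂μ = 0 := by
  obtain ⟨K, hK, hKμ⟩ := hcomp
  have hK_ae : ∀ᵐ z ∂μ, z ∈ K :=
    (ae_mem_iff_measure_eq hK.measurableSet.nullMeasurableSet).mpr (by rw [hKμ, measure_univ])
  have hpos_ae : ∀ᵐ z ∂μ, z ∈ {z | 0 < π z} :=
    (ae_mem_iff_measure_eq (measurableSet_lt measurable_const hπ.measurable).nullMeasurableSet).mpr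
      (by rw [hpos, measure_univ])
  refine herg.toMeasurePreserving.integral_eq_zero_of_comp_sub_ae_eq
    (Real.measurable_log.comp hπ.measurable)
    ((hΨ.log fun z => (hΨ0 z).ne').integrable_of_ae_mem_isCompact hK hK_ae) ?_
  filter_upwards [hpos_ae] with z hz
  simp only [Function.comp_apply, hrel, Real.log_mul hz.ne' (hΨ0 z).ne', add_sub_cancel_left]

/-- If `μ` is an ergodic `κ`-invariant Borel probability measure with compact
support giving full mass to `{z | 0 < π z}`, and `π (κ z) = π z * Ψ z` with `Ψ` positive
continuous and `π` continuous nonnegative, then `∫ ln Ψ dμ = 0`. -/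
theorem stmt0
    {S : Type*} [MetricSpace S] [MeasurableSpace S] [BorelSpace S]
    (κ : S → S) (hκ : Continuous κ)
    (π Ψ : S → ℝ) (hπ : Continuous π) (hπ0 : ∀ z, 0 ≤ π z)
    (hΨ : Continuous Ψ) (hΨ0 : ∀ z, 0 < Ψ z)
    (hrel : ∀ z, π (κ z) = π z * Ψ z)
    (μ : Measure S) [IsProbabilityMeasure μ]
    (herg : Ergodic κ μ)
    (hcomp : ∃ K : Set S, IsCompact K ∧ μ K = 1)
    (hpos : μ {z | 0 < π z} = 1) :
    ∫ z, Real.log (Ψ z) ∂μ = 0 :=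
  stmt0_general κ π Ψ hπ hΨ hΨ0 hrel μ herg hcomp hpos
end

section
/- Let κ : S → S be continuous on a compact metric space, π : S → [0,∞) continuous with π(κ(w)) = π(w)Ψ(w) for a continuous Ψ : S → (0,∞). If z satisfies π(z) > 0, then any weak* limit μ of the empirical measures along the forward orbit of z satisfies ∫ ln Ψ dμ ≤ 0. -/
open MeasureTheory Filter

/-- On a compact metric space, if `π (κ w) = π w * Ψ w` with `π ≥ 0`
continuous and `Ψ > 0` continuous, and `π z > 0`, then any weak* limit point `μ` of the
empirical measures `μ_n = (1/n) Σ_{m=0}^{n-1} δ_{κᵐ z}` satisfies `∫ ln Ψ dμ ≤ 0`. -/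
theorem stmt3
    {S : Type*} [MetricSpace S] [CompactSpace S] [MeasurableSpace S] [BorelSpace S]
    (κ : S → S) (hκ : Continuous κ)
    (π Ψ : S → ℝ) (hπ : Continuous π) (hπ0 : ∀ w, 0 ≤ π w)
    (hΨ : Continuous Ψ) (hΨ0 : ∀ w, 0 < Ψ w)
    (hrel : ∀ w, π (κ w) = π w * Ψ w)
    (z : S) (hz : 0 < π z)
    (μ : Measure S) [IsProbabilityMeasure μ]
    (φ : ℕ → ℕ) (hφ : StrictMono φ)
    (hlim : ∀ h : S → ℝ, Continuous h →
      Tendsto (fun k => (1 / (φ k : ℝ)) * ∑ m ∈ Finset.range (φ k), h (κ^[m] z))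
        atTop (nhds (∫ w, h w ∂μ))) :
    ∫ w, Real.log (Ψ w) ∂μ ≤ 0 := by
  -- positivity of π along the orbit
  have hp : ∀ m, 0 < π (κ^[m] z) := by
    intro m
    induction m with
    | zero => simpa using hz
    | succ n ih =>
        rw [Function.iterate_succ_apply', hrel]
        exact mul_pos ih (hΨ0 _)
  -- telescoping sum
  have hsum : ∀ n, ∑ m ∈ Finset.range n, Real.log (Ψ (κ^[m] z))
      = Real.log (π (κ^[n] z)) - Real.log (π z) := by
    intro n
    induction n with
    | zero => simp
    | succ n ih =>
        rw [Finset.sum_range_succ, ih, Function.iterate_succ_apply', hrel,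
          Real.log_mul (ne_of_gt (hp n)) (ne_of_gt (hΨ0 _))]
        ring
  -- bound π by its max
  obtain ⟨x, -, hx⟩ := isCompact_univ.exists_isMaxOn ⟨z, trivial⟩ hπ.continuousOn
  have hx : ∀ w, π w ≤ π x := fun w => hx (Set.mem_univ w)
  have hMpos : 0 < π x := lt_of_lt_of_le hz (hx z)
  set c : ℝ := Real.log (π x) - Real.log (π z) with hc
  have hcnn : 0 ≤ c := sub_nonneg.mpr (Real.log_le_log hz (hx z))
  have hbound : ∀ k, (1 / (φ k : ℝ)) * ∑ m ∈ Finset.range (φ k),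
      Real.log (Ψ (κ^[m] z)) ≤ c / (φ k : ℝ) := by
    intro k
    rw [hsum]
    rcases Nat.eq_zero_or_pos (φ k) with h0 | h0
    · simp [h0]
    · rw [one_div, inv_mul_le_iff₀ (by positivity),
        mul_div_cancel₀ _ (by positivity : (φ k : ℝ) ≠ 0)]
      exact sub_le_sub_right (Real.log_le_log (hp _) (hx _)) _
  have h1 := hlim (fun w => Real.log (Ψ w)) (hΨ.log (fun w => ne_of_gt (hΨ0 w)))
  have h2 : Tendsto (fun k => c / (φ k : ℝ)) atTop (nhds 0) :=
    (tendsto_const_div_atTop_nhds_zero_nat c).comp hφ.tendsto_atTop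
  exact le_of_tendsto_of_tendsto' h1 h2 hbound
end

section
/- Let κ : S → S be continuous on a compact metric space, π : S → [0,∞) continuous with π(κ(w)) = π(w)Ψ(w) for a continuous Ψ : S → (0,∞). If {z(-n)}_{n≥0} ⊂ S is a negative orbit (κ(z(-n)) = z(-n+1)) with π(z(0)) > 0, then any weak* limit μ of the backward empirical measures μ_n = (1/n)Σ_{m=1-n}^{0} δ_{z(m)} is κ-invariant and satisfies ∫ ln Ψ dμ ≥ 0. -/
open MeasureTheory Filter

/-- On a compact metric space, if `w : ℕ → S` is a negative orbit
(`κ (w (n+1)) = w n`, so `w n = z(-n)`) with `π (w 0) > 0`, then any weak* limit point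
`μ` of the backward empirical measures `μ_n = (1/n) Σ_{m=0}^{n-1} δ_{w m}` is
`κ`-invariant and satisfies `∫ ln Ψ dμ ≥ 0`. -/
theorem stmt4
    {S : Type*} [MetricSpace S] [CompactSpace S] [MeasurableSpace S] [BorelSpace S]
    (κ : S → S) (hκ : Continuous κ)
    (π Ψ : S → ℝ) (hπ : Continuous π) (hπ0 : ∀ v, 0 ≤ π v)
    (hΨ : Continuous Ψ) (hΨ0 : ∀ v, 0 < Ψ v)
    (hrel : ∀ v, π (κ v) = π v * Ψ v)
    (w : ℕ → S) (hw : ∀ n, κ (w (n + 1)) = w n) (hw0 : 0 < π (w 0))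
    (μ : Measure S) [IsProbabilityMeasure μ]
    (φ : ℕ → ℕ) (hφ : StrictMono φ)
    (hlim : ∀ h : S → ℝ, Continuous h →
      Tendsto (fun k => (1 / (φ k : ℝ)) * ∑ m ∈ Finset.range (φ k), h (w m))
        atTop (nhds (∫ v, h v ∂μ))) :
    (∀ h : S → ℝ, Continuous h → ∫ v, h (κ v) ∂μ = ∫ v, h v ∂μ) ∧
      0 ≤ ∫ v, Real.log (Ψ v) ∂μ := by
  have hφ' : Tendsto (fun k => (φ k : ℝ)) atTop atTop :=
    tendsto_natCast_atTop_atTop.comp hφ.tendsto_atTop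
  constructor
  · intro h hcont
    obtain ⟨M, hM⟩ := isCompact_univ.exists_bound_of_continuousOn hcont.continuousOn
    have Hκ := hlim (fun v => h (κ v)) (hcont.comp hκ)
    have Hh := hlim h hcont
    have key : ∀ n, ∑ m ∈ Finset.range (n + 1), h (κ (w m))
        = h (κ (w 0)) + ∑ m ∈ Finset.range n, h (w m) := by
      intro n
      rw [Finset.sum_range_succ']
      simp only [hw]
      ring
    have hdiff : Tendsto (fun k => (1 / (φ k : ℝ)) * ∑ m ∈ Finset.range (φ k), h (κ (w m))
        - (1 / (φ k : ℝ)) * ∑ m ∈ Finset.range (φ k), h (w m)) atTop (nhds 0) := by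
      apply squeeze_zero_norm' (a := fun k => (2 * M) / (φ k : ℝ))
      · filter_upwards [hφ.tendsto_atTop.eventually_ge_atTop 1] with k hk
        obtain ⟨n, hn⟩ : ∃ n, φ k = n + 1 := ⟨φ k - 1, by omega⟩
        rw [hn]
        rw [key n, Finset.sum_range_succ]
        have hd : (1 / ((n:ℝ) + 1)) * (h (κ (w 0)) + ∑ m ∈ Finset.range n, h (w m))
            - (1 / ((n:ℝ) + 1)) * ((∑ m ∈ Finset.range n, h (w m)) + h (w n))
            = (h (κ (w 0)) - h (w n)) / ((n:ℝ) + 1) := by ring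
        push_cast
        rw [hd]
        rw [Real.norm_eq_abs, abs_div]
        have hpos : (0:ℝ) < (n:ℝ) + 1 := by positivity
        rw [abs_of_pos hpos]
        have hub : |h (κ (w 0)) - h (w n)| ≤ 2 * M := by
          calc |h (κ (w 0)) - h (w n)| ≤ |h (κ (w 0))| + |h (w n)| := abs_sub _ _
            _ ≤ M + M := add_le_add (hM _ trivial) (hM _ trivial)
            _ = 2 * M := by ring
        gcongr
      · simpa using tendsto_const_nhds.div_atTop hφ'
    have : Tendsto (fun k => (1 / (φ k : ℝ)) * ∑ m ∈ Finset.range (φ k), h (κ (w m)))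
        atTop (nhds (∫ v, h v ∂μ + 0)) := by
      have := Hh.add hdiff
      simpa using this.congr (fun k => by ring)
    rw [add_zero] at this
    exact tendsto_nhds_unique Hκ this
  · have hlog : Continuous fun v => Real.log (Ψ v) := hΨ.log fun x => (hΨ0 x).ne'
    obtain ⟨C, hC⟩ := isCompact_univ.exists_bound_of_continuousOn hπ.continuousOn
    obtain ⟨L, hL⟩ := isCompact_univ.exists_bound_of_continuousOn hlog.continuousOn
    have prodid : ∀ n, π (w 0) = π (w n) * ∏ m ∈ Finset.range n, Ψ (w (m + 1)) := by
      intro n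
      induction n with
      | zero => simp
      | succ n ih =>
        have hstep : π (w n) = π (w (n + 1)) * Ψ (w (n + 1)) := by rw [← hrel, hw]
        rw [ih, Finset.prod_range_succ, hstep]; ring
    have hprodpos : ∀ n, (0:ℝ) < ∏ m ∈ Finset.range n, Ψ (w (m + 1)) :=
      fun n => Finset.prod_pos fun m _ => hΨ0 _
    have hπpos : ∀ n, 0 < π (w n) := by
      intro n
      rcases (hπ0 (w n)).lt_or_eq with h | h
      · exact h
      · exfalso
        have := prodid n
        rw [← h, zero_mul] at this
        exact absurd this.symm hw0.ne
    have logid : ∀ n, ∑ m ∈ Finset.range n, Real.log (Ψ (w m))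
        = Real.log (π (w 0)) - Real.log (π (w n))
          - Real.log (Ψ (w n)) + Real.log (Ψ (w 0)) := by
      intro n
      have h1 : Real.log (π (w 0))
          = Real.log (π (w n)) + ∑ m ∈ Finset.range n, Real.log (Ψ (w (m + 1))) := by
        rw [prodid n, Real.log_mul (hπpos n).ne' (hprodpos n).ne', Real.log_prod]
        intro m _; exact (hΨ0 _).ne'
      have h2 : ∑ m ∈ Finset.range n, Real.log (Ψ (w (m + 1)))
          = (∑ m ∈ Finset.range n, Real.log (Ψ (w m)))
            + Real.log (Ψ (w n)) - Real.log (Ψ (w 0)) := by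
        have := Finset.sum_range_succ' (fun m => Real.log (Ψ (w m))) n
        rw [Finset.sum_range_succ] at this
        linarith [this]
      linarith
    set b : ℝ := Real.log (π (w 0)) - Real.log C - 2 * L with hb
    have hlb : ∀ n, b ≤ ∑ m ∈ Finset.range n, Real.log (Ψ (w m)) := by
      intro n
      rw [logid n]
      have h1 : Real.log (π (w n)) ≤ Real.log C := by
        apply Real.log_le_log (hπpos n)
        calc π (w n) ≤ |π (w n)| := le_abs_self _
          _ ≤ C := hC _ trivial
      have h2 : |Real.log (Ψ (w n))| ≤ L := hL _ trivial
      have h3 : |Real.log (Ψ (w 0))| ≤ L := hL _ trivial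
      rw [abs_le] at h2 h3
      simp only [hb]
      linarith [h2.1, h2.2, h3.1, h3.2]
    have Hlog := hlim _ hlog
    have hzero : Tendsto (fun k => (1 / (φ k : ℝ)) * b) atTop (nhds 0) := by
      have := tendsto_const_nhds (x := b) (f := atTop (α := ℕ)) |>.div_atTop hφ'
      simpa [div_eq_mul_inv, mul_comm] using this
    refine le_of_tendsto_of_tendsto' hzero Hlog fun k => ?_
    exact mul_le_mul_of_nonneg_left (hlb (φ k)) (by positivity)
end

section
/- For the serial passage model, the invasion growth rate of species i at the periodic orbit supporting only species 1 equals r_i(μ_1) = (ln(1/δ)/2)·Σ_{y∈{0,1}}(ρ_i(y)/ρ_1(y) − 1). In particular r_1(μ_1) = 0. -/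
/-- In the serial passage model (species indices in `Fin 2`, environments
in `Fin 2`, growth rates `ρ i y > 0`, dilution factor `δ ∈ (0,1)`), the invasion growth
rate of species `i` at the periodic orbit supporting only species `0` (species 1),
`r i = (1/2)·Σ_y ρ i y · τ y + ln δ` with `τ y = (1/ρ 0 y)·ln(1/δ)`, equals
`(ln(1/δ)/2)·Σ_y (ρ i y / ρ 0 y − 1)`; in particular `r 0 = 0`. -/
theorem stmt7 (ρ : Fin 2 → Fin 2 → ℝ) (hρ : ∀ i y, 0 < ρ i y)
    (δ : ℝ) (hδ : 0 < δ) (hδ1 : δ < 1)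
    (τ : Fin 2 → ℝ) (hτ : ∀ y, τ y = (1 / ρ 0 y) * Real.log (1 / δ))
    (r : Fin 2 → ℝ)
    (hr : ∀ i, r i = (1 / 2) * ∑ y : Fin 2, ρ i y * τ y + Real.log δ) :
    (∀ i, r i = (Real.log (1 / δ) / 2) * ∑ y : Fin 2, (ρ i y / ρ 0 y - 1)) ∧ r 0 = 0 := by
  have hlog : Real.log (1 / δ) = -Real.log δ := by
    rw [one_div, Real.log_inv]
  have key : ∀ i, r i = (Real.log (1 / δ) / 2) * ∑ y : Fin 2, (ρ i y / ρ 0 y - 1) := by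
    intro i
    rw [hr i, Fin.sum_univ_two, Fin.sum_univ_two, hτ 0, hτ 1, hlog]
    have h0 := (hρ 0 0).ne'
    have h1 := (hρ 0 1).ne'
    field_simp
    ring
  refine ⟨key, ?_⟩
  rw [key 0, Fin.sum_univ_two]
  have h0 := (hρ 0 0).ne'
  have h1 := (hρ 0 1).ne'
  rw [div_self h0, div_self h1]
  ring
end

section
/- The fractional linear map y ↦ (dγ₁y + (1−d)γ₂(1−y))/(γ₁y + γ₂(1−y)) on [0,1], with γ₁, γ₂ > 0, γ₁ ≠ γ₂, and d ∈ (0,1), has a fixed point y* in [0,1] given by y* = (−2γ₂ + dγ₂ + dγ₁ + √(d²γ₂² − 8dγ₁γ₂ + 2d²γ₁γ₂ + 4γ₁γ₂ + d²γ₁²))/(2(γ₁ − γ₂)). -/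
/-!
Clearing the denominator, `y` is a fixed point of the map exactly when it is a root of
`q y = (γ₁ - γ₂) y² + ((2 - d) γ₂ - d γ₁) y - (1 - d) γ₂`, and the displayed formula is the
root `(-b + √(discrim a b c)) / (2a)` of `q`. Since `q 0 = -(1 - d) γ₂ < 0 < (1 - d) γ₁ = q 1`,
that root lies in `(0, 1)`: from `4a q(y) = (2ay + b)² - discrim a b c`, the signs of `q 0` and
`q 1` compare `b` and `2a + b` with `√(discrim a b c)`, whichever the sign of `a`.
-/

open Set

section Quadratic

variable {a b c : ℝ}

theorem four_mul_quadratic_eq (a b c y : ℝ) :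
    4 * a * (a * (y * y) + b * y + c) = (2 * a * y + b) ^ 2 - discrim a b c := by
  unfold discrim
  ring

theorem discrim_pos_of_neg_of_pos (ha : a ≠ 0) (h0 : c < 0) (h1 : 0 < a + b + c) :
    0 < discrim a b c := by
  have hq1 := four_mul_quadratic_eq a b c 1
  rcases ha.lt_or_gt with ha | ha
  · nlinarith [sq_nonneg (2 * a + b)]
  · unfold discrim
    nlinarith [sq_nonneg b]

theorem quadratic_root_mem_Ioo (ha : a ≠ 0) (h0 : c < 0) (h1 : 0 < a + b + c) :
    (-b + √(discrim a b c)) / (2 * a) ∈ Ioo 0 1 := by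
  have hD := discrim_pos_of_neg_of_pos ha h0 h1
  set s := √(discrim a b c)
  have hs : 0 < s := Real.sqrt_pos.2 hD
  have hs2 : s ^ 2 = discrim a b c := Real.sq_sqrt hD.le
  have hq0 := four_mul_quadratic_eq a b c 0
  have hq1 := four_mul_quadratic_eq a b c 1
  rcases ha.lt_or_gt with ha | ha
  · have hb : s < b := by nlinarith
    have h2ab : 2 * a + b < s := by nlinarith
    exact ⟨div_pos_of_neg_of_neg (by linarith) (by linarith),
      (div_lt_one_of_neg (by linarith)).2 (by linarith)⟩
  · have hb : b < s := by nlinarith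
    have h2ab : s < 2 * a + b := by nlinarith
    exact ⟨div_pos (by linarith) (by linarith), (div_lt_one (by linarith)).2 (by linarith)⟩

theorem quadratic_root_isRoot (ha : a ≠ 0) (hD : 0 ≤ discrim a b c) :
    let r := (-b + √(discrim a b c)) / (2 * a)
    a * (r * r) + b * r + c = 0 :=
  (quadratic_eq_zero_iff ha (Real.mul_self_sqrt hD).symm _).2 (Or.inl rfl)

end Quadratic

theorem dispersal_map_eq_self_of_quadratic {γ₁ γ₂ d y : ℝ}
    (hden : γ₁ * y + γ₂ * (1 - y) ≠ 0)
    (hq : (γ₁ - γ₂) * (y * y) + ((2 - d) * γ₂ - d * γ₁) * y + -((1 - d) * γ₂) = 0) :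
    (d * γ₁ * y + (1 - d) * γ₂ * (1 - y)) / (γ₁ * y + γ₂ * (1 - y)) = y := by
  rw [div_eq_iff hden]
  linear_combination -hq

theorem stmt8_general (γ₁ γ₂ d : ℝ) (hγ₁ : 0 < γ₁) (hγ₂ : 0 < γ₂) (hne : γ₁ ≠ γ₂)
    (hd1 : d < 1)
    (ystar : ℝ)
    (hy : ystar = (-2 * γ₂ + d * γ₂ + d * γ₁ +
      Real.sqrt (d ^ 2 * γ₂ ^ 2 - 8 * d * γ₁ * γ₂ + 2 * d ^ 2 * γ₁ * γ₂ +
        4 * γ₁ * γ₂ + d ^ 2 * γ₁ ^ 2)) / (2 * (γ₁ - γ₂))) :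
    ystar ∈ Set.Icc (0 : ℝ) 1 ∧
      (d * γ₁ * ystar + (1 - d) * γ₂ * (1 - ystar)) /
        (γ₁ * ystar + γ₂ * (1 - ystar)) = ystar := by
  have ha : γ₁ - γ₂ ≠ 0 := sub_ne_zero.2 hne
  have h1d : 0 < 1 - d := sub_pos.2 hd1
  have hc : -((1 - d) * γ₂) < 0 := neg_neg_of_pos (mul_pos h1d hγ₂)
  have hq1 : 0 < (γ₁ - γ₂) + ((2 - d) * γ₂ - d * γ₁) + -((1 - d) * γ₂) := by
    linear_combination mul_pos h1d hγ₁
  have hy' : ystar = (-((2 - d) * γ₂ - d * γ₁) +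
      √(discrim (γ₁ - γ₂) ((2 - d) * γ₂ - d * γ₁) (-((1 - d) * γ₂)))) / (2 * (γ₁ - γ₂)) := by
    rw [hy, discrim]
    ring_nf
  obtain ⟨h0, h1⟩ := hy' ▸ quadratic_root_mem_Ioo ha hc hq1
  refine ⟨⟨h0.le, h1.le⟩, dispersal_map_eq_self_of_quadratic ?_ ?_⟩
  · exact (add_pos (mul_pos hγ₁ h0) (mul_pos hγ₂ (sub_pos.2 h1))).ne'
  · rw [hy']
    exact quadratic_root_isRoot ha (discrim_pos_of_neg_of_pos ha hc hq1).le

/-- The fractional linear map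
`y ↦ (dγ₁y + (1−d)γ₂(1−y))/(γ₁y + γ₂(1−y))` on `[0,1]`, with `γ₁, γ₂ > 0`, `γ₁ ≠ γ₂`,
`d ∈ (0,1)`, has a fixed point `y* ∈ [0,1]` given by the explicit formula. -/
theorem stmt8 (γ₁ γ₂ d : ℝ) (hγ₁ : 0 < γ₁) (hγ₂ : 0 < γ₂) (hne : γ₁ ≠ γ₂)
    (hd0 : 0 < d) (hd1 : d < 1)
    (ystar : ℝ)
    (hy : ystar = (-2 * γ₂ + d * γ₂ + d * γ₁ +
      Real.sqrt (d ^ 2 * γ₂ ^ 2 - 8 * d * γ₁ * γ₂ + 2 * d ^ 2 * γ₁ * γ₂ +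
        4 * γ₁ * γ₂ + d ^ 2 * γ₁ ^ 2)) / (2 * (γ₁ - γ₂))) :
    ystar ∈ Set.Icc (0 : ℝ) 1 ∧
      (d * γ₁ * ystar + (1 - d) * γ₂ * (1 - ystar)) /
        (γ₁ * ystar + γ₂ * (1 - ystar)) = ystar :=
  stmt8_general γ₁ γ₂ d hγ₁ hγ₂ hne hd1 ystar hy
end
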